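/- Let A, A₁, A₂ be real n×n matrices with A₁ symmetric positive definite and A₂ symmetric, and suppose A = A₁·A₂ or A = A₂·A₁. If A is normally elliptic, then A₂ is positive definite. -/

import Mathlib

open Matrix

/-- A real square matrix is *normally elliptic* if every eigenvalue
(i.e. every element of the spectrum of the associated complex matrix)
has positive real part. -/
def NormallyElliptic {n : ℕ} (A : Matrix (Fin n) (Fin n) ℝ) : Prop :=
  ∀ μ ∈ spectrum ℂ (A.map Complex.ofReal), 0 < μ.re

/-- A (possibly nonsymmetric) real matrix is positive definite if `zᵀ M z > 0`
for all nonzero `z ∈ ℝⁿ`. -/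
def PosDefMat {n : ℕ} (M : Matrix (Fin n) (Fin n) ℝ) : Prop :=
  ∀ z : Fin n → ℝ, z ≠ 0 → 0 < z ⬝ᵥ M.mulVec z

/-!
Take the positive definite square root `S` of `A₁`. The symmetric matrix `S A₂ S` has the same
characteristic polynomial as `A` (`XY` and `YX` always share it), so its eigenvalues are those of
`A`; being real and with positive real part, they are positive, hence `S A₂ S` is positive
definite, and so is its congruent `A₂`.
-/

open Polynomial
open scoped ComplexOrder

lemma Matrix.PosDef.exists_posDef_mul_self_eq {𝕜 n : Type*} [RCLike 𝕜] [Fintype n]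
    [DecidableEq n] {A : Matrix n n 𝕜} (hA : A.PosDef) :
    ∃ S : Matrix n n 𝕜, S.PosDef ∧ S * S = A := by
  open scoped MatrixOrder in
  exact ⟨CFC.sqrt A, hA.isStrictlyPositive.sqrt.posDef,
    CFC.sqrt_mul_sqrt_self A hA.posSemidef.nonneg⟩

lemma posDefMat_iff_posDef {n : ℕ} {M : Matrix (Fin n) (Fin n) ℝ} (hM : M.IsSymm) :
    PosDefMat M ↔ M.PosDef := by
  simp [posDef_iff_dotProduct_mulVec, hM, PosDefMat]

lemma mem_spectrum_map_ofReal_iff {ι : Type*} [Fintype ι] [DecidableEq ι] (M : Matrix ι ι ℝ)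
    (μ : ℂ) :
    μ ∈ spectrum ℂ (M.map Complex.ofReal) ↔ (M.charpoly.map Complex.ofRealHom).IsRoot μ := by
  rw [mem_spectrum_iff_isRoot_charpoly, ← charpoly_map]
  rfl

lemma ofReal_mem_spectrum_map_ofReal_iff {ι : Type*} [Fintype ι] [DecidableEq ι]
    (M : Matrix ι ι ℝ) (μ : ℝ) :
    (μ : ℂ) ∈ spectrum ℂ (M.map Complex.ofReal) ↔ μ ∈ spectrum ℝ M := by
  rw [mem_spectrum_map_ofReal_iff, mem_spectrum_iff_isRoot_charpoly, IsRoot, IsRoot, eval_map,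
    ← Complex.ofRealHom_eq_coe, eval₂_at_apply, Complex.ofRealHom_eq_coe, Complex.ofReal_eq_zero]

lemma NormallyElliptic.of_charpoly_eq {n : ℕ} {M N : Matrix (Fin n) (Fin n) ℝ}
    (hMN : M.charpoly = N.charpoly) (hN : NormallyElliptic N) : NormallyElliptic M := by
  intro μ hμ
  rw [mem_spectrum_map_ofReal_iff, hMN, ← mem_spectrum_map_ofReal_iff] at hμ
  exact hN μ hμ

lemma Matrix.IsHermitian.posDef_of_normallyElliptic {n : ℕ} {M : Matrix (Fin n) (Fin n) ℝ}
    (hM : M.IsHermitian) (h : NormallyElliptic M) : M.PosDef :=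
  hM.posDef_iff_eigenvalues_pos.mpr fun i => by
    simpa using h _ <|
      (ofReal_mem_spectrum_map_ofReal_iff M _).mpr (hM.eigenvalues_mem_spectrum_real i)

/-- If `A = A₁·A₂` or `A = A₂·A₁` with `A₁` symmetric positive definite and
`A₂` symmetric, and `A` is normally elliptic, then `A₂` is positive definite. -/
theorem posDef_of_symm_factor_of_normallyElliptic {n : ℕ}
    (A A₁ A₂ : Matrix (Fin n) (Fin n) ℝ)
    (h₁s : A₁.IsSymm) (h₁pd : PosDefMat A₁) (h₂s : A₂.IsSymm)
    (hfac : A = A₁ * A₂ ∨ A = A₂ * A₁)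
    (hA : NormallyElliptic A) :
    PosDefMat A₂ := by
  obtain ⟨S, hS, rfl⟩ := ((posDefMat_iff_posDef h₁s).mp h₁pd).exists_posDef_mul_self_eq
  have hSstar : star S = S := hS.isHermitian.eq
  have hC : (star S * A₂ * S).IsHermitian :=
    isHermitian_conjTranspose_mul_mul S (isHermitian_iff_isSymm.mpr h₂s)
  have hcharpoly : (star S * A₂ * S).charpoly = A.charpoly := by
    rcases hfac with rfl | rfl
    · rw [hSstar, charpoly_mul_comm, ← mul_assoc]
    · rw [hSstar, mul_assoc, charpoly_mul_comm, mul_assoc]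
  rw [posDefMat_iff_posDef h₂s, ← hS.isUnit.posDef_star_left_conjugate_iff]
  exact hC.posDef_of_normallyElliptic (hA.of_charpoly_eq hcharpoly)
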